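/- Let β be a positive integer and m ≥ 1 a real number. Let x be an arcsine-distributed random variable, d uniform on {−1,+1}, and h a Nakagami-m amplitude, all mutually independent. Let Y = h·d·β·x (the correlator output of the β_r = 0 SR-DCSK symbol consisting of β identical chips d·x). Then for any reals ε₁, ε₂, the harvested DC satisfies ε₁·E[Y²] + ε₂·E[Y⁴] = (1/2)·ε₁·β² + (3(1+m)/(8m))·ε₂·β⁴. -/

import Mathlib

open MeasureTheory ProbabilityTheory
open scoped ENNReal

/-- The arcsine (Chebyshev invariant) distribution on (−1,1), with density
1/(π√(1−x²)) for |x| < 1 and 0 otherwise. -/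
noncomputable def arcsineMeasure : Measure ℝ :=
  volume.withDensity fun x =>
    ENNReal.ofReal (if |x| < 1 then 1 / (Real.pi * Real.sqrt (1 - x ^ 2)) else 0)

/-- The uniform distribution on {−1, +1}. -/
noncomputable def rademacherMeasure : Measure ℝ :=
  (1 / 2 : ℝ≥0∞) • Measure.dirac (-1) + (1 / 2 : ℝ≥0∞) • Measure.dirac 1

/-- The distribution of a unit-mean-power Nakagami-m amplitude, with density
2 m^m z^{2m−1} e^{−m z²}/Γ(m) for z ≥ 0 and 0 otherwise. -/
noncomputable def nakagamiMeasure (m : ℝ) : Measure ℝ :=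
  volume.withDensity fun z =>
    ENNReal.ofReal (if 0 ≤ z then
      2 * m ^ m * z ^ (2 * m - 1) * Real.exp (-m * z ^ 2) / Real.Gamma m else 0)

/-!
Independence factors the moments: E[Y^k] = β^k E[x^k] E[d^k] E[h^k]. Substituting x = sin θ turns
the arcsine moments into Wallis integrals over (-π/2, π/2), d^k = 1 for even k, and substituting
u = z² turns the even Nakagami moments into Gamma integrals, E[h^(2j)] = Γ(m+j)/(Γ(m) m^j).
-/

open Set Real

lemma integral_withDensity_ofReal {X : Type*} [MeasurableSpace X] {μ : Measure X} {ρ : X → ℝ}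
    (hρ : Measurable ρ) (hρ_nonneg : ∀ x, 0 ≤ ρ x) (g : X → ℝ) :
    ∫ x, g x ∂μ.withDensity (fun x => ENNReal.ofReal (ρ x)) = ∫ x, ρ x * g x ∂μ := by
  rw [integral_withDensity_eq_integral_toReal_smul hρ.ennreal_ofReal
    (ae_of_all _ fun _ => ENNReal.ofReal_lt_top)]
  simp only [ENNReal.toReal_ofReal (hρ_nonneg _), smul_eq_mul]

lemma integral_pow_arcsineMeasure (k : ℕ) :
    ∫ t, t ^ k ∂arcsineMeasure = (∫ θ in -(π / 2)..π / 2, sin θ ^ k) / π := by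
  set ρ : ℝ → ℝ := fun t => if |t| < 1 then 1 / (π * √(1 - t ^ 2)) else 0
  have hρ : Measurable ρ := by
    refine Measurable.ite (measurableSet_lt (by fun_prop) measurable_const) ?_ measurable_const
    fun_prop
  have hρ_nonneg : ∀ t, 0 ≤ ρ t := fun t => by
    simp only [ρ]; split_ifs <;> positivity
  have hsupp : ∀ t ∉ Ioo (-1 : ℝ) 1, ρ t * t ^ k = 0 := fun t ht => by
    rw [mem_Ioo, ← abs_lt] at ht
    simp [ρ, ht]
  have hsin : sin '' Ioo (-(π / 2)) (π / 2) = Ioo (-1) 1 := by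
    simpa using sinPartialHomeomorph.image_source_eq_target
  rw [arcsineMeasure, integral_withDensity_ofReal hρ hρ_nonneg,
    ← setIntegral_eq_integral_of_forall_compl_eq_zero hsupp, ← hsin,
    integral_image_eq_integral_abs_deriv_smul measurableSet_Ioo
      (fun θ _ => (hasDerivAt_sin θ).hasDerivWithinAt) sinPartialHomeomorph.injOn,
    intervalIntegral.integral_of_le (by linarith [pi_pos]), integral_Ioc_eq_integral_Ioo,
    ← integral_div]
  refine setIntegral_congr_fun measurableSet_Ioo fun θ hθ => ?_
  have hcos : 0 < cos θ := cos_pos_of_mem_Ioo hθ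
  have hsinθ : |sin θ| < 1 := abs_lt.mpr (mapsTo_sin_Ioo hθ)
  have hsq : 1 - sin θ ^ 2 = cos θ ^ 2 := by rw [← cos_sq']
  simp only [ρ, if_pos hsinθ, smul_eq_mul, abs_of_pos hcos, hsq, sqrt_sq hcos.le]
  field_simp

lemma integral_sq_arcsineMeasure : ∫ t, t ^ 2 ∂arcsineMeasure = 1 / 2 := by
  rw [integral_pow_arcsineMeasure, integral_sin_sq]
  simp only [sin_neg, sin_pi_div_two, cos_neg, cos_pi_div_two]
  field_simp
  ring

lemma integral_pow_four_arcsineMeasure : ∫ t, t ^ 4 ∂arcsineMeasure = 3 / 8 := by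
  rw [integral_pow_arcsineMeasure, integral_sin_pow, integral_sin_sq]
  simp only [sin_neg, sin_pi_div_two, cos_neg, cos_pi_div_two]
  field_simp
  ring

lemma integral_pow_rademacherMeasure_of_even {k : ℕ} (hk : Even k) :
    ∫ t, t ^ k ∂rademacherMeasure = 1 := by
  have hint : ∀ a : ℝ, Integrable (fun t : ℝ => t ^ k) (Measure.dirac a) := fun a =>
    (integrable_const (a ^ k)).congr (by simp [Filter.EventuallyEq, ae_dirac_eq])
  rw [rademacherMeasure, integral_add_measure ((hint _).smul_measure (by simp))
    ((hint _).smul_measure (by simp)), integral_smul_measure, integral_smul_measure,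
    integral_dirac, integral_dirac, hk.neg_pow]
  norm_num

lemma integral_pow_two_mul_nakagamiMeasure {m : ℝ} (hm : 0 < m) (j : ℕ) :
    ∫ t, t ^ (2 * j) ∂nakagamiMeasure m = Gamma (m + j) / (Gamma m * m ^ j) := by
  set ρ : ℝ → ℝ := fun z => if 0 ≤ z then
    2 * m ^ m * z ^ (2 * m - 1) * exp (-m * z ^ 2) / Gamma m else 0
  have hρ : Measurable ρ := by
    refine Measurable.ite measurableSet_Ici ?_ measurable_const
    fun_prop
  have hρ_nonneg : ∀ z, 0 ≤ ρ z := fun z => by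
    simp only [ρ]
    split_ifs with hz
    · have := Gamma_pos_of_pos hm
      positivity
    · rfl
  have hsupp : ∀ t ∉ Ici (0 : ℝ), ρ t * t ^ (2 * j) = 0 := fun t ht => by
    simp only [mem_Ici] at ht
    simp [ρ, ht]
  set g : ℝ → ℝ := fun u => u ^ (m + j - 1) * exp (-(m * u))
  have hsubst : ∀ x ∈ Ioi (0 : ℝ),
      ρ x * x ^ (2 * j) = m ^ m / Gamma m * ((2 * x ^ ((2 : ℝ) - 1)) • g (x ^ (2 : ℝ))) :=
    fun x (hx : 0 < x) => by
    have hpow :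
        x ^ (2 * m - 1) * x ^ (2 * j) = x ^ ((2 : ℝ) - 1) * (x ^ (2 : ℝ)) ^ (m + j - 1) := by
      rw [← rpow_natCast, ← rpow_mul hx.le, ← rpow_add hx, ← rpow_add hx]
      congr 1
      push_cast
      ring
    simp only [ρ, g, if_pos hx.le, smul_eq_mul, rpow_two, neg_mul] at hpow ⊢
    linear_combination (2 * m ^ m * exp (-(m * x ^ 2)) / Gamma m) * hpow
  have hm_pow : m ^ m * (1 / m) ^ (m + j) = 1 / m ^ j := by
    rw [rpow_add (by positivity), ← mul_assoc, one_div, inv_rpow hm.le, mul_inv_cancel₀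
      (rpow_pos_of_pos hm m).ne', rpow_natCast, one_mul, inv_pow, one_div]
  rw [nakagamiMeasure, integral_withDensity_ofReal hρ hρ_nonneg,
    ← setIntegral_eq_integral_of_forall_compl_eq_zero hsupp, integral_Ici_eq_integral_Ioi,
    setIntegral_congr_fun measurableSet_Ioi hsubst, integral_const_mul,
    integral_comp_rpow_Ioi_of_pos two_pos, integral_rpow_mul_exp_neg_mul_Ioi (by positivity) hm]
  linear_combination (Gamma (m + j) / Gamma m) * hm_pow

lemma integral_sq_nakagamiMeasure {m : ℝ} (hm : 0 < m) : ∫ t, t ^ 2 ∂nakagamiMeasure m = 1 := by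
  have h := integral_pow_two_mul_nakagamiMeasure hm 1
  rw [Nat.cast_one, Gamma_add_one hm.ne'] at h
  rw [h]
  field_simp [(Gamma_pos_of_pos hm).ne']

lemma integral_pow_four_nakagamiMeasure {m : ℝ} (hm : 0 < m) :
    ∫ t, t ^ 4 ∂nakagamiMeasure m = (1 + m) / m := by
  have h := integral_pow_two_mul_nakagamiMeasure hm 2
  rw [Nat.cast_ofNat, show m + 2 = m + 1 + 1 by ring, Gamma_add_one (by positivity),
    Gamma_add_one hm.ne'] at h
  rw [h]
  field_simp [(Gamma_pos_of_pos hm).ne']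
  ring

lemma integral_mul_mul_pow_of_iIndepFun {Ω : Type*} [MeasurableSpace Ω] {P : Measure Ω}
    {X₀ X₁ X₂ : Ω → ℝ} (hX : iIndepFun ![X₀, X₁, X₂] P) (h₀ : AEMeasurable X₀ P)
    (h₁ : AEMeasurable X₁ P) (h₂ : AEMeasurable X₂ P) (k : ℕ) :
    ∫ ω, (X₀ ω * X₁ ω * X₂ ω) ^ k ∂P
      = (∫ t, t ^ k ∂P.map X₀) * (∫ t, t ^ k ∂P.map X₁) * ∫ t, t ^ k ∂P.map X₂ := by
  have hpow (ν : Measure ℝ) : AEStronglyMeasurable (fun t : ℝ => t ^ k) ν :=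
    (continuous_pow k).aestronglyMeasurable
  have h := hX.integral_fun_prod_comp (f := fun _ t => t ^ k)
    (fun i => by fin_cases i <;> assumption) (fun _ => hpow _)
  simp only [Fin.prod_univ_three, Matrix.cons_val_zero, Matrix.cons_val_one,
    Matrix.cons_val_two, Matrix.tail_cons, Matrix.head_cons, ← mul_pow] at h
  rw [h, integral_map h₀ (hpow _), integral_map h₁ (hpow _), integral_map h₂ (hpow _)]

theorem stmt_11_general {Ω : Type*} [MeasurableSpace Ω] (P : Measure Ω)
    (β : ℕ) (m : ℝ) (hm : 1 ≤ m)
    (x d h : Ω → ℝ)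
    (hxmeas : Measurable x) (hdmeas : Measurable d) (hhmeas : Measurable h)
    (hxlaw : Measure.map x P = arcsineMeasure)
    (hdlaw : Measure.map d P = rademacherMeasure)
    (hhlaw : Measure.map h P = nakagamiMeasure m)
    (hindep : iIndepFun ![x, d, h] P)
    (Y : Ω → ℝ) (hY : Y = fun ω => h ω * d ω * (β : ℝ) * x ω)
    (ε₁ ε₂ : ℝ) :
    ε₁ * (∫ ω, Y ω ^ 2 ∂P) + ε₂ * (∫ ω, Y ω ^ 4 ∂P)
      = (1 / 2) * ε₁ * (β : ℝ) ^ 2 + (3 * (1 + m) / (8 * m)) * ε₂ * (β : ℝ) ^ 4 := by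
  have hm0 : 0 < m := by linarith
  have hY_moment (k : ℕ) : ∫ ω, Y ω ^ k ∂P = (β : ℝ) ^ k *
      ((∫ t, t ^ k ∂arcsineMeasure) * (∫ t, t ^ k ∂rademacherMeasure) *
        ∫ t, t ^ k ∂nakagamiMeasure m) := by
    rw [← hxlaw, ← hdlaw, ← hhlaw, ← integral_mul_mul_pow_of_iIndepFun hindep
      hxmeas.aemeasurable hdmeas.aemeasurable hhmeas.aemeasurable, ← integral_const_mul, hY]
    congr 1 with ω
    ring
  rw [hY_moment, hY_moment, integral_sq_arcsineMeasure, integral_pow_four_arcsineMeasure,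
    integral_pow_rademacherMeasure_of_even even_two,
    integral_pow_rademacherMeasure_of_even (by decide), integral_sq_nakagamiMeasure hm0,
    integral_pow_four_nakagamiMeasure hm0]
  field_simp

/-- harvested DC of the correlator output Y = h·d·β·x of the
β_r = 0 SR-DCSK symbol (β identical chips d·x) over a Nakagami-m channel:
ε₁E[Y²] + ε₂E[Y⁴] = (1/2)ε₁β² + (3(1+m)/(8m))ε₂β⁴. -/
theorem stmt_11 {Ω : Type*} [MeasurableSpace Ω] (P : Measure Ω) [IsProbabilityMeasure P]
    (β : ℕ) (hβ : 0 < β) (m : ℝ) (hm : 1 ≤ m)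
    (x d h : Ω → ℝ)
    (hxmeas : Measurable x) (hdmeas : Measurable d) (hhmeas : Measurable h)
    (hxlaw : Measure.map x P = arcsineMeasure)
    (hdlaw : Measure.map d P = rademacherMeasure)
    (hhlaw : Measure.map h P = nakagamiMeasure m)
    (hindep : iIndepFun ![x, d, h] P)
    (Y : Ω → ℝ) (hY : Y = fun ω => h ω * d ω * (β : ℝ) * x ω)
    (ε₁ ε₂ : ℝ) :
    ε₁ * (∫ ω, Y ω ^ 2 ∂P) + ε₂ * (∫ ω, Y ω ^ 4 ∂P)
      = (1 / 2) * ε₁ * (β : ℝ) ^ 2 + (3 * (1 + m) / (8 * m)) * ε₂ * (β : ℝ) ^ 4 :=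
  stmt_11_general P β m hm x d h hxmeas hdmeas hhmeas hxlaw hdlaw hhlaw hindep Y hY ε₁ ε₂
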